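/- arXiv:2102.13486 — 6 statements merged into one kernel-verified Lean document; each statement's English description precedes it below -/
import Mathlib

section
/- If F is an order ideal of a vector lattice E having the b-property in E, then F is a band in E. -/
/-!
Let `a = sup A` with `A ⊆ F` and fix `a₀ ∈ A`. Solid subgroups are closed under `⊔`, so
`D = F ∩ [a₀, a]` is directed upwards, and `y ↦ y - a₀` is an increasing net in `F⁺` indexed
by `D` and bounded by `a - a₀`. The b-property gives `f ∈ F` above this net; since
`b ⊔ a₀ ∈ D` for every `b ∈ A`, the element `f + a₀` bounds `A`, hence `0 ≤ a - a₀ ≤ f`, and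
solidity puts `a - a₀`, and so `a`, in `F`.
-/

universe u

open LatticeOrderedAddCommGroup

section

variable {E : Type u} [AddCommGroup E] [Lattice E] [AddLeftMono E]

def HasBProperty (F : Set E) : Prop :=
  ∀ (ι : Type u) [Preorder ι] [Nonempty ι] [IsDirected ι (· ≤ ·)] (x : ι → E),
    (∀ i, x i ∈ F) → (∀ i, 0 ≤ x i) → Monotone x → (∃ e : E, ∀ i, x i ≤ e) →
      ∃ f ∈ F, ∀ i, x i ≤ f

lemma abs_posPart_le_abs (a : E) : |a⁺| ≤ |a| := by
  rw [abs_of_nonneg (posPart_nonneg a)]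
  exact sup_le (le_abs_self a) (abs_nonneg a)

lemma eq_zero_of_isLUB_empty {a : E} (ha : IsLUB ∅ a) : a = 0 := by
  have hbot := isLUB_empty_iff.mp ha
  refine le_antisymm (hbot 0) ?_
  simpa using hbot (a + a)

namespace AddSubgroup

variable {F : AddSubgroup E}

lemma mem_of_nonneg_of_le_of_isSolid (hF : IsSolid (F : Set E)) {x y : E}
    (hy : 0 ≤ y) (hyx : y ≤ x) (hx : x ∈ F) : y ∈ F :=
  hF hx <| by rwa [abs_of_nonneg hy, abs_of_nonneg (hy.trans hyx)]

lemma supClosed_of_isSolid (hF : IsSolid (F : Set E)) : SupClosed (F : Set E) := by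
  intro x hx y hy
  rw [SetLike.mem_coe, sup_eq_add_posPart_sub]
  exact F.add_mem hy (hF (F.sub_mem hx hy) (abs_posPart_le_abs _))

lemma mem_of_isLUB_of_hasBProperty (hF : IsSolid (F : Set E)) (hb : HasBProperty (F : Set E))
    {A : Set E} {a₀ a : E} (ha₀ : a₀ ∈ A) (hA : A ⊆ F) (ha : IsLUB A a) : a ∈ F := by
  set D : Set E := (F : Set E) ∩ Set.Icc a₀ a
  have hD : SupClosed D := fun y hy z hz =>
    ⟨supClosed_of_isSolid hF hy.1 hz.1, hy.2.1.trans le_sup_left, sup_le hy.2.2 hz.2.2⟩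
  have hbD : ∀ b ∈ A, b ⊔ a₀ ∈ D := fun b hb =>
    ⟨supClosed_of_isSolid hF (hA hb) (hA ha₀), le_sup_right, sup_le (ha.1 hb) (ha.1 ha₀)⟩
  have : Nonempty D := ⟨⟨a₀, hA ha₀, le_rfl, ha.1 ha₀⟩⟩
  have : IsDirected D (· ≤ ·) := hD.directedOn.isDirectedOrder
  obtain ⟨f, hfF, hf⟩ := hb D (fun y => (y : E) - a₀)
    (fun y => F.sub_mem y.2.1 (hA ha₀)) (fun y => sub_nonneg.mpr y.2.2.1)
    (fun _ _ hyz => sub_le_sub_right (Subtype.coe_le_coe.mpr hyz) a₀) ⟨a - a₀, fun y => sub_le_sub_right y.2.2.2 a₀⟩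
  have hub : a ≤ f + a₀ := ha.2 fun b hb =>
    le_sup_left.trans (sub_le_iff_le_add.mp (hf ⟨b ⊔ a₀, hbD b hb⟩))
  have hsub : a - a₀ ∈ F :=
    mem_of_nonneg_of_le_of_isSolid hF (sub_nonneg.mpr (ha.1 ha₀)) (sub_le_iff_le_add.mpr hub) hfF
  simpa using F.add_mem hsub (hA ha₀)

end AddSubgroup

end

theorem order_ideal_with_b_property_is_band_general
    {E : Type u} [AddCommGroup E] [Lattice E]
    [CovariantClass E E (· + ·) (· ≤ ·)] [Module ℝ E]
    (F : Submodule ℝ E) (hsolid : ∀ x y : E, |y| ≤ |x| → x ∈ F → y ∈ F)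
    (hb : ∀ (ι : Type u) [Preorder ι] [Nonempty ι] [IsDirected ι (· ≤ ·)]
      (x : ι → E), (∀ i, x i ∈ F) → (∀ i, 0 ≤ x i) → Monotone x →
      (∃ e : E, ∀ i, x i ≤ e) → ∃ f ∈ F, ∀ i, x i ≤ f) :
    ∀ A : Set E, A ⊆ (F : Set E) → ∀ a : E, IsLUB A a → a ∈ F := by
  intro A hA a ha
  have hF : IsSolid (F.toAddSubgroup : Set E) := fun x hx y hy => hsolid x y hy hx
  rcases A.eq_empty_or_nonempty with rfl | ⟨a₀, ha₀⟩
  · rw [eq_zero_of_isLUB_empty ha]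
    exact F.zero_mem
  · exact AddSubgroup.mem_of_isLUB_of_hasBProperty hF hb ha₀ hA ha

/-- An order ideal with the b-property in `E` is a band in `E`. -/
theorem order_ideal_with_b_property_is_band
    {E : Type u} [AddCommGroup E] [Lattice E]
    [CovariantClass E E (· + ·) (· ≤ ·)] [Module ℝ E]
    (arch : ∀ x y : E, (∀ n : ℕ, n • x ≤ y) → x ≤ 0)
    (F : Submodule ℝ E) (hsolid : ∀ x y : E, |y| ≤ |x| → x ∈ F → y ∈ F)
    (hb : ∀ (ι : Type u) [Preorder ι] [Nonempty ι] [IsDirected ι (· ≤ ·)]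
      (x : ι → E), (∀ i, x i ∈ F) → (∀ i, 0 ≤ x i) → Monotone x →
      (∃ e : E, ∀ i, x i ≤ e) → ∃ f ∈ F, ∀ i, x i ≤ f) :
    ∀ A : Set E, A ⊆ (F : Set E) → ∀ a : E, IsLUB A a → a ∈ F :=
  order_ideal_with_b_property_is_band_general F hsolid hb
end

section
/- Any sublattice F of a vector lattice E has the b-property in the order ideal I(F) generated by F in E. -/
universe u

/-- `A` has the b-property in `B`. -/
def HasBProp {X : Type u} [AddCommGroup X] [Lattice X] (A B : Set X) : Prop :=
  ∀ (ι : Type u) [Preorder ι] [Nonempty ι] [IsDirected ι (· ≤ ·)] (x : ι → X),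
    (∀ i, x i ∈ A) → (∀ i, 0 ≤ x i) → Monotone x →
    (∃ e ∈ B, ∀ i, x i ≤ e) → ∃ f ∈ A, ∀ i, x i ≤ f

theorem b_property_in_generated_ideal_general
    {E : Type u} [AddCommGroup E] [Lattice E]
    [Module ℝ E]
    (F : Submodule ℝ E) :
    HasBProp (F : Set E) {x : E | ∃ f ∈ F, 0 ≤ f ∧ |x| ≤ f} := by
  rintro ι _ _ _ x - - - ⟨e, ⟨f, hfF, -, hef⟩, hxe⟩
  exact ⟨f, hfF, fun i => (hxe i).trans ((le_abs_self e).trans hef)⟩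

/-- A sublattice `F` has the b-property in the order ideal `I(F)` generated by `F`. -/
theorem b_property_in_generated_ideal
    {E : Type u} [AddCommGroup E] [Lattice E]
    [CovariantClass E E (· + ·) (· ≤ ·)] [Module ℝ E]
    (arch : ∀ x y : E, (∀ n : ℕ, n • x ≤ y) → x ≤ 0)
    (F : Submodule ℝ E) (hFlat : ∀ x ∈ F, ∀ y ∈ F, x ⊔ y ∈ F) :
    HasBProp (F : Set E) {x : E | ∃ f ∈ F, 0 ≤ f ∧ |x| ≤ f} :=
  b_property_in_generated_ideal_general F
end

section
/- Let F be an order ideal of a locally solid vector lattice E(τ) having the b-property in E. Then F is uτ-closed in E if and only if F is τ-closed in E. -/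
/-!
A τ-convergent net is uτ-convergent, since `|x - a| ⊓ u ≤ |x - a|` and 𝓝 0 has a basis of solid
sets; so a uτ-closed set is τ-closed. Conversely, if `x i → a` in uτ, then
`||x i| ⊓ |a| - |a|| ≤ |x i - a| ⊓ |a|`, hence `|x i| ⊓ |a| → |a|` in τ. For a τ-closed ideal `F`
with `x i ∈ F` this puts `|a|`, and therefore `a`, in `F`.
-/

universe u

open Filter Topology LatticeOrderedAddCommGroup

namespace Filter

variable {α : Type*} {f : Filter α}

instance : SemilatticeInf {s : Set α // s ∈ f} := Subtype.semilatticeInf fun _ _ => inter_mem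

instance : Nonempty {s : Set α // s ∈ f} := ⟨⟨Set.univ, univ_mem⟩⟩

/-- The members of `f`, directed by reverse inclusion, index a net converging to `f`. -/
theorem tendsto_atTop_of_choice_mem {x : {s : Set α // s ∈ f}ᵒᵈ → α}
    (hx : ∀ s, x s ∈ (OrderDual.ofDual s).val) : Tendsto x atTop f :=
  fun s hs => mem_atTop_sets.mpr ⟨OrderDual.toDual ⟨s, hs⟩, fun t hts => hts (hx t)⟩

end Filter

section LocallySolid

variable {E : Type*} [Lattice E] [AddCommGroup E]

theorem abs_abs_inf_abs_sub_abs_le [CovariantClass E E (· + ·) (· ≤ ·)] (x a : E) :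
    |(|x| ⊓ |a| - |a|)| ≤ |x - a| ⊓ |a| := by
  have hdist : |(|x| ⊓ |a| - |a|)| ≤ |x - a| :=
    calc |(|x| ⊓ |a| - |a|)| = |(|x| ⊓ |a| - |a| ⊓ |a|)| := by rw [inf_idem]
      _ ≤ |(|x| - |a|)| := abs_inf_sub_inf_le_abs _ _ _
      _ ≤ |x - a| := abs_abs_sub_abs_le _ _
  have hbound : |(|x| ⊓ |a| - |a|)| ≤ |a| := by
    rw [abs_sub_comm, abs_of_nonneg (sub_nonneg.mpr inf_le_right)]
    exact sub_le_self _ (le_inf (abs_nonneg _) (abs_nonneg _))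
  exact le_inf hdist hbound

variable [TopologicalSpace E] {ι : Type*} {l : Filter ι}

/-- uτ-convergence of `x` to `a` along `l`. -/
def UnboundedTendsto (x : ι → E) (l : Filter ι) (a : E) : Prop :=
  ∀ u : E, 0 ≤ u → Tendsto (fun i => |x i - a| ⊓ u) l (𝓝 0)

theorem tendsto_zero_of_abs_le (hE : (𝓝 (0 : E)).HasBasis (fun t => t ∈ 𝓝 0 ∧ IsSolid t) id)
    {f g : ι → E} (hg : Tendsto g l (𝓝 0)) (hfg : ∀ᶠ i in l, |f i| ≤ |g i|) :
    Tendsto f l (𝓝 0) :=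
  hE.tendsto_right_iff.mpr fun _ ⟨ht, hsolid⟩ =>
    (hfg.and (hg ht)).mono fun _ ⟨hle, hi⟩ => hsolid hi hle

variable [CovariantClass E E (· + ·) (· ≤ ·)] [IsTopologicalAddGroup E]
  (hE : (𝓝 (0 : E)).HasBasis (fun t => t ∈ 𝓝 0 ∧ IsSolid t) id)
include hE

theorem Filter.Tendsto.unboundedTendsto {x : ι → E} {a : E} (h : Tendsto x l (𝓝 a)) :
    UnboundedTendsto x l a := fun u hu =>
  tendsto_zero_of_abs_le hE (tendsto_sub_nhds_zero_iff.mpr h) <| .of_forall fun _ => by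
    rw [abs_of_nonneg (le_inf (abs_nonneg _) hu)]
    exact inf_le_left

theorem UnboundedTendsto.tendsto_abs_inf_abs {x : ι → E} {a : E} (h : UnboundedTendsto x l a) :
    Tendsto (fun i => |x i| ⊓ |a|) l (𝓝 |a|) :=
  tendsto_sub_nhds_zero_iff.mp <| tendsto_zero_of_abs_le hE (h |a| (abs_nonneg a)) <|
    .of_forall fun _ => (abs_abs_inf_abs_sub_abs_le _ _).trans_eq
      (abs_of_nonneg (le_inf (abs_nonneg _) (abs_nonneg _))).symm

theorem LatticeOrderedAddCommGroup.IsSolid.mem_of_unboundedTendsto {S : Set E}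
    (hS : IsSolid S) (hcl : IsClosed S) [l.NeBot] {x : ι → E} {a : E} (hx : ∀ i, x i ∈ S) (h : UnboundedTendsto x l a) : a ∈ S := by
  have habs : |a| ∈ S := hcl.mem_of_tendsto (h.tendsto_abs_inf_abs hE) <| .of_forall fun i =>
    hS (hx i) <| by
      rw [abs_of_nonneg (le_inf (abs_nonneg _) (abs_nonneg _))]
      exact inf_le_left
  exact hS habs (abs_abs a).ge

end LocallySolid

theorem ideal_with_b_property_utau_closed_iff_tau_closed_general
    {E : Type u} [AddCommGroup E] [Lattice E]
    [CovariantClass E E (· + ·) (· ≤ ·)] [Module ℝ E]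
    [TopologicalSpace E] [IsTopologicalAddGroup E]
    (hls : ∀ s ∈ nhds (0 : E), ∃ t ∈ nhds (0 : E), t ⊆ s ∧
      ∀ x y : E, |x| ≤ |y| → y ∈ t → x ∈ t)
    (F : Submodule ℝ E) (hsolid : ∀ x y : E, |y| ≤ |x| → x ∈ F → y ∈ F) :
    (∀ (ι : Type u) [Preorder ι] [Nonempty ι] [IsDirected ι (· ≤ ·)]
        (x : ι → E) (a : E), (∀ i, x i ∈ F) →
        (∀ u : E, 0 ≤ u → Tendsto (fun i => |x i - a| ⊓ u) atTop (nhds 0)) →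
        a ∈ F)
      ↔ IsClosed (F : Set E) := by
  have hE : (𝓝 (0 : E)).HasBasis (fun t => t ∈ 𝓝 0 ∧ IsSolid t) id :=
    hasBasis_self.mpr fun s hs =>
      let ⟨t, ht, hts, htsolid⟩ := hls s hs
      ⟨t, ht, fun _ hx _ hy => htsolid _ _ hy hx, hts⟩
  have hF : IsSolid (F : Set E) := fun _ hx _ hy => hsolid _ _ hy hx
  constructor
  · intro h
    refine isClosed_of_closure_subset fun b hb => ?_
    choose x hxs hxF using fun s : {s : Set E // s ∈ 𝓝 b}ᵒᵈ =>
      mem_closure_iff_nhds.mp hb _ (OrderDual.ofDual s).2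
    exact h _ x b hxF ((tendsto_atTop_of_choice_mem hxs).unboundedTendsto hE)
  · intro hcl ι _ _ _ x a hxF hconv
    exact hF.mem_of_unboundedTendsto hE hcl hxF hconv

/-- For an order ideal `F` with the b-property in a locally solid vector lattice
`E(τ)`, `F` is uτ-closed iff it is τ-closed. -/
theorem ideal_with_b_property_utau_closed_iff_tau_closed
    {E : Type u} [AddCommGroup E] [Lattice E]
    [CovariantClass E E (· + ·) (· ≤ ·)] [Module ℝ E]
    [TopologicalSpace E] [IsTopologicalAddGroup E] [T2Space E]
    (hls : ∀ s ∈ nhds (0 : E), ∃ t ∈ nhds (0 : E), t ⊆ s ∧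
      ∀ x y : E, |x| ≤ |y| → y ∈ t → x ∈ t)
    (F : Submodule ℝ E) (hsolid : ∀ x y : E, |y| ≤ |x| → x ∈ F → y ∈ F)
    (hb : ∀ (ι : Type u) [Preorder ι] [Nonempty ι] [IsDirected ι (· ≤ ·)]
      (x : ι → E), (∀ i, x i ∈ F) → (∀ i, 0 ≤ x i) → Monotone x →
      (∃ e : E, ∀ i, x i ≤ e) → ∃ f ∈ F, ∀ i, x i ≤ f) :
    (∀ (ι : Type u) [Preorder ι] [Nonempty ι] [IsDirected ι (· ≤ ·)]
        (x : ι → E) (a : E), (∀ i, x i ∈ F) →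
        (∀ u : E, 0 ≤ u → Tendsto (fun i => |x i - a| ⊓ u) atTop (nhds 0)) →
        a ∈ F)
      ↔ IsClosed (F : Set E) :=
  ideal_with_b_property_utau_closed_iff_tau_closed_general hls F hsolid
end

section
/- Let E be a Dedekind complete vector lattice with a weak order unit having the countable b-property in its universal completion E^u. Then E = E^u. -/
/-!
Since `E` is Dedekind complete and order dense in the Archimedean lattice `G`, it is an ideal
of `G`: whenever `0 ≤ g ≤ J y`, the supremum in `E` of `{x | J x ≤ g}` is mapped by `J` to `g`.
The image of the weak unit `e` is a weak unit of `G`, so every `g ≥ 0` is the supremum of the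
increasing sequence `g ⊓ n • J e`, whose terms lie in `E`. By the countable b-property this
sequence is bounded in `E` by some `u`, hence `0 ≤ g ≤ J u` and `g` lies in `E` too.
-/

universe u

def DedekindComplete (α : Type*) [Preorder α] : Prop :=
  ∀ A : Set α, A.Nonempty → BddAbove A → ∃ s, IsLUB A s

-- Archimedean in the sense of Riesz spaces; for non-linear orders Mathlib's `Archimedean`
-- is a stronger condition.
def ArchimedeanLattice (G : Type*) [AddCommGroup G] [Preorder G] : Prop :=
  ∀ x y : G, (∀ n : ℕ, n • x ≤ y) → x ≤ 0

def IsWeakOrderUnit {α : Type*} [Lattice α] [Zero α] (e : α) : Prop :=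
  ∀ x, 0 ≤ x → x ⊓ e = 0 → x = 0

section LatticeGroup

variable {G : Type*} [AddCommGroup G] [Lattice G] [AddLeftMono G]

theorem DedekindComplete.archimedeanLattice (hG : DedekindComplete G) : ArchimedeanLattice G := by
  intro x y h
  obtain ⟨s, hs⟩ := hG (Set.range fun n : ℕ => n • x) ⟨0, 0, zero_nsmul x⟩
    ⟨y, by rintro _ ⟨n, rfl⟩; exact h n⟩
  have hsx : s ≤ s - x := hs.2 <| by
    rintro _ ⟨n, rfl⟩
    exact le_sub_iff_add_le.mpr (succ_nsmul x n ▸ hs.1 ⟨n + 1, rfl⟩)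
  exact (le_sub_self_iff s).mp hsx

theorem ArchimedeanLattice.le_of_forall_inf_nsmul_le (hG : ArchimedeanLattice G) {u g b : G}
    (hu0 : 0 ≤ u) (hu : IsWeakOrderUnit u) (hg : 0 ≤ g) (h : ∀ n : ℕ, g ⊓ n • u ≤ b) :
    g ≤ b := by
  set t := (g - g ⊓ b) ⊓ u
  have ht : ∀ n : ℕ, n • t ≤ g ⊓ n • u := by
    intro n
    induction n with
    | zero => simpa using hg
    | succ n ih =>
      have hgb : g - g ⊓ b ≤ g - g ⊓ n • u := sub_le_sub_left (le_inf inf_le_left (h n)) g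
      refine le_inf ?_ (nsmul_le_nsmul_right inf_le_right _)
      calc (n + 1) • t = n • t + t := succ_nsmul t n
        _ ≤ g ⊓ n • u + (g - g ⊓ n • u) := add_le_add ih (inf_le_left.trans hgb)
        _ = g := add_sub_cancel _ _
  have ht0 : t = 0 :=
    le_antisymm (hG t g fun n => (ht n).trans inf_le_left)
      (le_inf (sub_nonneg.mpr inf_le_left) hu0)
  have hgb : g - g ⊓ b = 0 := hu _ (sub_nonneg.mpr inf_le_left) ht0
  exact inf_eq_left.mp (sub_eq_zero.mp hgb).symm

end LatticeGroup

theorem surjective_of_forall_nonneg_exists_map_eq {E G F : Type*} [AddGroup E] [AddCommGroup G]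
    [Lattice G] [AddLeftMono G] [FunLike F E G] [AddMonoidHomClass F E G] (J : F)
    (h : ∀ g : G, 0 ≤ g → ∃ x, J x = g) : Function.Surjective J := by
  intro g
  obtain ⟨a, ha⟩ := h g⁺ (posPart_nonneg g)
  obtain ⟨b, hb⟩ := h g⁻ (negPart_nonneg g)
  exact ⟨a - b, by rw [map_sub, ha, hb, posPart_sub_negPart]⟩

section LatticeEmbedding

variable {E G F : Type*}

section SupPreserving

variable [Lattice E] [Lattice G] [FunLike F E G] (J : F)

theorem monotone_of_map_sup (hsup : ∀ x y, J (x ⊔ y) = J x ⊔ J y) : Monotone J := fun x y h => by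
  rw [← sup_eq_right.mpr h, hsup]
  exact le_sup_left

theorem map_le_map_iff_of_map_sup (hsup : ∀ x y, J (x ⊔ y) = J x ⊔ J y)
    (hinj : Function.Injective J) {x y : E} : J x ≤ J y ↔ x ≤ y :=
  ⟨fun h => sup_eq_right.mp (hinj (by rw [hsup, sup_eq_right.mpr h])),
    fun h => monotone_of_map_sup J hsup h⟩

end SupPreserving

theorem exists_pos_map_le_sub_inf [AddCommGroup G] [Lattice G] [AddLeftMono G] [FunLike F E G]
    (J : F) (hdense : ∀ g : G, 0 < g → ∃ x, 0 < J x ∧ J x ≤ g) {h b : G} (hhb : ¬h ≤ b) :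
    ∃ z, 0 < J z ∧ J z ≤ h - h ⊓ b :=
  hdense _ (sub_pos.mpr (inf_le_left.lt_of_ne fun h' => hhb (inf_eq_left.mp h')))

theorem isLUB_image_setOf_map_le [AddCommGroup E] [AddCommGroup G] [Lattice G] [AddLeftMono G]
    [FunLike F E G] [AddMonoidHomClass F E G] (J : F)
    (hdense : ∀ g : G, 0 < g → ∃ x, 0 < J x ∧ J x ≤ g) (hG : ArchimedeanLattice G) {h : G}
    (hh : 0 ≤ h) :
    IsLUB (J '' {x | J x ≤ h}) h := by
  refine ⟨by rintro _ ⟨x, hx, rfl⟩; exact hx, fun b hb => ?_⟩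
  by_contra hhb
  obtain ⟨z, hz0, hz⟩ := exists_pos_map_le_sub_inf J hdense hhb
  -- the gap `h - h ⊓ b` has room for `J z`, so all its multiples stay below `h`
  have hnz : ∀ n : ℕ, n • J z ≤ h := by
    intro n
    induction n with
    | zero => simpa using hh
    | succ n ih =>
      have hnb : n • J z ≤ b := by simpa using hb ⟨n • z, by simpa using ih, rfl⟩
      calc (n + 1) • J z = n • J z + J z := succ_nsmul _ n
        _ ≤ h ⊓ b + (h - h ⊓ b) := add_le_add (le_inf ih hnb) hz
        _ = h := add_sub_cancel _ _
  exact hz0.not_ge (hG _ _ hnz)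

variable [AddCommGroup E] [Lattice E] [AddLeftMono E] [AddCommGroup G] [Lattice G] [AddLeftMono G]
  [FunLike F E G] [AddMonoidHomClass F E G] (J : F)

theorem map_inf_of_map_sup (hsup : ∀ x y, J (x ⊔ y) = J x ⊔ J y) (x y : E) :
    J (x ⊓ y) = J x ⊓ J y := by
  rw [eq_sub_of_add_eq (inf_add_sup x y), map_sub, map_add, hsup,
    eq_sub_of_add_eq (inf_add_sup (J x) (J y))]

theorem isLUB_image_of_isLUB (hdense : ∀ g : G, 0 < g → ∃ x, 0 < J x ∧ J x ≤ g)
    (hsup : ∀ x y, J (x ⊔ y) = J x ⊔ J y)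
    (hinj : Function.Injective J) {A : Set E} {x : E} (hx : IsLUB A x) : IsLUB (J '' A) (J x) := by
  refine ⟨(monotone_of_map_sup J hsup).mem_upperBounds_image hx.1, fun b hb => ?_⟩
  by_contra hxb
  obtain ⟨z, hz0, hz⟩ := exists_pos_map_le_sub_inf J hdense hxb
  have hub : x - z ∈ upperBounds A := fun a ha => by
    refine (map_le_map_iff_of_map_sup J hsup hinj).mp ?_
    calc J a ≤ J x ⊓ b := le_inf (monotone_of_map_sup J hsup (hx.1 ha)) (hb ⟨a, ha, rfl⟩)
      _ ≤ J (x - z) := by rw [map_sub]; exact le_sub_comm.mp hz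
  have hz' : z ≤ 0 := (le_sub_self_iff x).mp (hx.2 hub)
  exact hz0.not_ge (by simpa using monotone_of_map_sup J hsup hz')

theorem exists_map_eq_of_nonneg_of_le_map (hdense : ∀ g : G, 0 < g → ∃ x, 0 < J x ∧ J x ≤ g)
    (hE : DedekindComplete E) (hG : ArchimedeanLattice G)
    (hsup : ∀ x y, J (x ⊔ y) = J x ⊔ J y) (hinj : Function.Injective J) {h : G} (hh : 0 ≤ h)
    {y : E} (hy : h ≤ J y) : ∃ x, J x = h := by
  obtain ⟨s, hs⟩ := hE {x | J x ≤ h} ⟨0, by simpa using hh⟩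
    ⟨y, fun x hx => (map_le_map_iff_of_map_sup J hsup hinj).mp (hx.trans hy)⟩
  exact ⟨s, (isLUB_image_of_isLUB J hdense hsup hinj hs).unique
    (isLUB_image_setOf_map_le J hdense hG hh)⟩

theorem IsWeakOrderUnit.map (hdense : ∀ g : G, 0 < g → ∃ x, 0 < J x ∧ J x ≤ g) {e : E}
    (he : IsWeakOrderUnit e) (he0 : 0 ≤ e) (hsup : ∀ x y, J (x ⊔ y) = J x ⊔ J y)
    (hinj : Function.Injective J) : IsWeakOrderUnit (J e) := by
  intro g hg hge
  by_contra hg0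
  obtain ⟨z, hz0, hzg⟩ := hdense g (hg.lt_of_ne (Ne.symm hg0))
  have hJe0 : 0 ≤ J e := by simpa using monotone_of_map_sup J hsup he0
  have hJze : J (z ⊓ e) = J 0 := by
    rw [map_inf_of_map_sup J hsup, map_zero]
    exact le_antisymm (hge ▸ inf_le_inf_right _ hzg) (le_inf hz0.le hJe0)
  have hz : 0 ≤ z := (map_le_map_iff_of_map_sup J hsup hinj).mp (by simpa using hz0.le)
  have hz' : z = 0 := he z hz (hinj hJze)
  exact hz0.ne' (by simp [hz'])

end LatticeEmbedding

theorem dedekind_complete_weak_unit_countable_b_property_general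
    {E : Type u} {G : Type u}
    [AddCommGroup E] [Lattice E] [CovariantClass E E (· + ·) (· ≤ ·)] [Module ℝ E]
    [AddCommGroup G] [Lattice G] [CovariantClass G G (· + ·) (· ≤ ·)] [Module ℝ G]
    -- `E` is Dedekind complete
    (hDed : ∀ A : Set E, A.Nonempty → BddAbove A → ∃ s : E, IsLUB A s)
    -- `E` has a weak order unit
    (e : E) (he : 0 < e) (hweak : ∀ x : E, 0 ≤ x → x ⊓ e = 0 → x = 0)
    -- `G` is a universal completion of `E`: Dedekind complete and laterally
    -- complete, containing `E` as an order dense sublattice via `J`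
    (hGDed : ∀ A : Set G, A.Nonempty → BddAbove A → ∃ s : G, IsLUB A s)
    (J : E →ₗ[ℝ] G) (hJlat : ∀ x y : E, J (x ⊔ y) = J x ⊔ J y)
    (hJinj : Function.Injective J)
    (hdense : ∀ g : G, 0 < g → ∃ x : E, 0 < J x ∧ J x ≤ g)
    -- countable b-property of `E` in `G`
    (hcb : ∀ x : ℕ → E, (∀ n, 0 ≤ x n) → Monotone x →
      (∃ g : G, ∀ n, J (x n) ≤ g) → ∃ u : E, ∀ n, x n ≤ u) :
    Function.Surjective J := by
  have hG : ArchimedeanLattice G := DedekindComplete.archimedeanLattice hGDed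
  have hJe : IsWeakOrderUnit (J e) := IsWeakOrderUnit.map J hdense hweak he.le hJlat hJinj
  have hJe0 : 0 ≤ J e := by simpa using monotone_of_map_sup J hJlat he.le
  have hJle : ∀ {x y : E}, J x ≤ J y ↔ x ≤ y := map_le_map_iff_of_map_sup J hJlat hJinj
  have hideal : ∀ {h : G}, 0 ≤ h → ∀ {y : E}, h ≤ J y → ∃ x, J x = h :=
    exists_map_eq_of_nonneg_of_le_map J hdense hDed hG hJlat hJinj
  refine surjective_of_forall_nonneg_exists_map_eq J fun g hg => ?_
  have hgn : ∀ n : ℕ, 0 ≤ g ⊓ n • J e := fun n => le_inf hg (nsmul_nonneg hJe0 n)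
  choose x hx using fun n : ℕ =>
    hideal (hgn n) (y := n • e) (by rw [map_nsmul]; exact inf_le_right)
  have hx0 : ∀ n, 0 ≤ x n := fun n => hJle.mp (by rw [map_zero, hx]; exact hgn n)
  have hxmono : Monotone x := monotone_nat_of_le_succ fun n => hJle.mp <| by
    rw [hx, hx]
    exact inf_le_inf_left g (nsmul_le_nsmul_left hJe0 n.le_succ)
  obtain ⟨u, hu⟩ := hcb x hx0 hxmono ⟨g, fun n => hx n ▸ inf_le_left⟩
  exact hideal hg (hG.le_of_forall_inf_nsmul_le hJe0 hJe hg fun n => hx n ▸ hJle.mpr (hu n))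

/-- A Dedekind complete vector lattice with a weak order unit having the countable
b-property in its universal completion coincides with its universal completion. -/
theorem dedekind_complete_weak_unit_countable_b_property
    {E : Type u} {G : Type u}
    [AddCommGroup E] [Lattice E] [CovariantClass E E (· + ·) (· ≤ ·)] [Module ℝ E]
    [AddCommGroup G] [Lattice G] [CovariantClass G G (· + ·) (· ≤ ·)] [Module ℝ G]
    -- `E` is Dedekind complete
    (hDed : ∀ A : Set E, A.Nonempty → BddAbove A → ∃ s : E, IsLUB A s)
    -- `E` has a weak order unit
    (e : E) (he : 0 < e) (hweak : ∀ x : E, 0 ≤ x → x ⊓ e = 0 → x = 0)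
    -- `G` is a universal completion of `E`: Dedekind complete and laterally
    -- complete, containing `E` as an order dense sublattice via `J`
    (hGDed : ∀ A : Set G, A.Nonempty → BddAbove A → ∃ s : G, IsLUB A s)
    (hGlat : ∀ A : Set G, (∀ x ∈ A, 0 ≤ x) →
      (A.Pairwise fun x y => x ⊓ y = 0) → ∃ s : G, IsLUB A s)
    (J : E →ₗ[ℝ] G) (hJlat : ∀ x y : E, J (x ⊔ y) = J x ⊔ J y)
    (hJinj : Function.Injective J)
    (hdense : ∀ g : G, 0 < g → ∃ x : E, 0 < J x ∧ J x ≤ g)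
    -- countable b-property of `E` in `G`
    (hcb : ∀ x : ℕ → E, (∀ n, 0 ≤ x n) → Monotone x →
      (∃ g : G, ∀ n, J (x n) ≤ g) → ∃ u : E, ∀ n, x n ≤ u) :
    Function.Surjective J :=
  dedekind_complete_weak_unit_countable_b_property_general hDed e he hweak hGDed J hJlat hJinj
    hdense hcb
end

section
/- Let F be an order dense and majorizing sublattice of an order complete vector lattice E. Then every increasing net in F⁺ that is order bounded in E is uo-Cauchy in F. -/
/-!
Let `s` be the supremum in `E` of the increasing net `x`. The net `|x i - x j| ⊓ u` is dominated
by `(f - x k) ⊓ u` for `i, j ≥ k`, where `f` runs over the majorants of `s` in `F`; this family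
lies in `F` and decreases along `(k, f)`. If `l ∈ F` is below all of it, then `x k ≤ f - l` for
all `k`, so `f - l⁺` is again a majorant of `s` in `F`. Iterating from a majorant `f₀` gives
`n • l⁺ ≤ f₀ - s` for all `n`, and `E` is Archimedean because it is Dedekind complete, so
`l ≤ l⁺ ≤ 0`.
-/

universe u

/-- The net `z` order converges to `0` relatively to the sublattice `F`:
there is a decreasing net in `F` whose infimum (computed relative to `F`) is `0`
and which eventually dominates `|z|`. -/
def OrderConvZeroIn {E : Type u} [AddCommGroup E] [Lattice E] (F : Set E)
    {κ : Type u} [Preorder κ] (z : κ → E) : Prop :=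
  ∃ (β : Type u) (pβ : Preorder β) (y : β → E),
    Nonempty β ∧
    (∀ b₁ b₂ : β, ∃ b₃ : β, pβ.le b₁ b₃ ∧ pβ.le b₂ b₃) ∧
    (∀ b, y b ∈ F) ∧
    (∀ b₁ b₂ : β, pβ.le b₁ b₂ → y b₂ ≤ y b₁) ∧
    (∀ b, 0 ≤ y b) ∧
    (∀ l ∈ F, (∀ b, l ≤ y b) → l ≤ 0) ∧
    (∀ b, ∃ k₀ : κ, ∀ k ≥ k₀, |z k| ≤ y b)

open Set OrderDual

section LatticeOrderedGroup

variable {E : Type u} [AddCommGroup E] [Lattice E] [AddLeftMono E]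

theorem nonpos_of_forall_nsmul_le
    (hDed : ∀ A : Set E, A.Nonempty → BddAbove A → ∃ s : E, IsLUB A s)
    {a c : E} (h : ∀ n : ℕ, n • a ≤ c) : a ≤ 0 := by
  obtain ⟨t, ht⟩ := hDed (range fun n : ℕ => n • a) (range_nonempty _)
    ⟨c, forall_mem_range.2 h⟩
  have hshift : t ≤ t - a :=
    ht.2 <| forall_mem_range.2 fun n =>
      le_sub_iff_add_le.2 (succ_nsmul a n ▸ ht.1 (mem_range_self (n + 1)))
  simpa using sub_nonneg.2 hshift

theorem abs_sub_le_sub_of_le_of_le {a b c d : E} (hca : c ≤ a) (hcb : c ≤ b)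
    (had : a ≤ d) (hbd : b ≤ d) : |a - b| ≤ d - c := by
  rw [abs_sub_comm, ← sup_sub_inf_eq_abs_sub]
  exact sub_le_sub (sup_le had hbd) (le_inf hca hcb)

theorem AddSubgroup.inf_mem_of_sup_mem (F : AddSubgroup E)
    (hF : ∀ x ∈ F, ∀ y ∈ F, x ⊔ y ∈ F) {a b : E} (ha : a ∈ F) (hb : b ∈ F) : a ⊓ b ∈ F := by
  rw [← neg_neg (a ⊓ b), neg_inf]
  exact F.neg_mem (hF _ (F.neg_mem ha) _ (F.neg_mem hb))

theorem nonpos_of_sub_mem_majorants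
    (hDed : ∀ A : Set E, A.Nonempty → BddAbove A → ∃ s : E, IsLUB A s)
    (F : AddSubgroup E) {s a f₀ : E} (ha : a ∈ F) (hf₀ : f₀ ∈ F) (hsf₀ : s ≤ f₀)
    (hstep : ∀ f ∈ F, s ≤ f → s ≤ f - a) : a ≤ 0 := by
  have hiter : ∀ n : ℕ, f₀ - n • a ∈ F ∧ s ≤ f₀ - n • a := by
    intro n
    induction n with
    | zero => simpa using ⟨hf₀, hsf₀⟩
    | succ n ih =>
      rw [succ_nsmul, ← sub_sub]
      exact ⟨F.sub_mem ih.1 ha, hstep _ ih.1 ih.2⟩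
  refine nonpos_of_forall_nsmul_le hDed (c := f₀ - s) fun n => ?_
  rw [le_sub_comm]
  exact (hiter n).2

theorem nonpos_of_forall_le_majorant_sub
    (hDed : ∀ A : Set E, A.Nonempty → BddAbove A → ∃ s : E, IsLUB A s)
    (F : AddSubgroup E) (hF : ∀ x ∈ F, ∀ y ∈ F, x ⊔ y ∈ F)
    {ι : Type*} {x : ι → E} {s f₀ l : E} (hs : IsLUB (range x) s) (hf₀ : f₀ ∈ F)
    (hsf₀ : s ≤ f₀) (hl : l ∈ F) (hle : ∀ i, ∀ f ∈ F, s ≤ f → l ≤ f - x i) : l ≤ 0 := by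
  have hstep : ∀ f ∈ F, s ≤ f → s ≤ f - (l ⊔ 0) := fun f hf hsf => by
    have hsl : s ≤ f - l :=
      hs.2 <| forall_mem_range.2 fun i => le_sub_comm.1 (hle i f hf hsf)
    rw [sub_sup, sub_zero]
    exact le_inf hsl hsf
  exact le_sup_left.trans
    (nonpos_of_sub_mem_majorants hDed F (hF _ hl _ F.zero_mem) hf₀ hsf₀ hstep)

theorem exists_ge_ge_prod_majorants (F : AddSubgroup E)
    (hF : ∀ x ∈ F, ∀ y ∈ F, x ⊔ y ∈ F) (s : E) {ι : Type*} [Preorder ι]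
    [IsDirected ι (· ≤ ·)] (p q : ι × (↥((F : Set E) ∩ Ici s))ᵒᵈ) :
    ∃ r, p ≤ r ∧ q ≤ r := by
  obtain ⟨i, f, hf, hsf⟩ := p
  obtain ⟨j, g, hg, hsg⟩ := q
  obtain ⟨k, hik, hjk⟩ := directed_of (· ≤ ·) i j
  exact ⟨(k, toDual ⟨f ⊓ g, F.inf_mem_of_sup_mem hF hf hg, le_inf hsf hsg⟩),
    ⟨hik, inf_le_left⟩, ⟨hjk, inf_le_right⟩⟩

end LatticeOrderedGroup

theorem increasing_b_bounded_net_uo_cauchy_general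
    {E : Type u} [AddCommGroup E] [Lattice E]
    [CovariantClass E E (· + ·) (· ≤ ·)] [Module ℝ E]
    -- `E` is order complete
    (hDed : ∀ A : Set E, A.Nonempty → BddAbove A → ∃ s : E, IsLUB A s)
    (F : Submodule ℝ E) (hFlat : ∀ x ∈ F, ∀ y ∈ F, x ⊔ y ∈ F)
    (hmaj : ∀ e : E, 0 ≤ e → ∃ f ∈ F, e ≤ f)
    {ι : Type u} [Preorder ι] [Nonempty ι] [IsDirected ι (· ≤ ·)]
    (x : ι → E) (hxF : ∀ i, x i ∈ F) (hmono : Monotone x)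
    (e : E) (hbdd : ∀ i, x i ≤ e) :
    ∀ u ∈ F, 0 ≤ u →
      OrderConvZeroIn (F : Set E) (fun p : ι × ι => |x p.1 - x p.2| ⊓ u) := by
  intro u huF hu0
  obtain ⟨s, hs⟩ := hDed (range x) (range_nonempty x) ⟨e, forall_mem_range.2 hbdd⟩
  have hxs : ∀ i, x i ≤ s := fun i => hs.1 (mem_range_self i)
  obtain ⟨f₀, hf₀, hsf₀⟩ := hmaj (s ⊔ 0) le_sup_right
  replace hsf₀ : s ≤ f₀ := le_sup_left.trans hsf₀
  refine ⟨ι × (↥((F : Set E) ∩ Ici s))ᵒᵈ, inferInstance,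
    fun p => ((ofDual p.2).1 - x p.1) ⊓ u, ⟨(Classical.arbitrary ι, toDual ⟨f₀, hf₀, hsf₀⟩)⟩,
    exists_ge_ge_prod_majorants F.toAddSubgroup hFlat s, fun p => ?_, ?_, fun p => ?_, ?_,
    fun p => ⟨(p.1, p.1), fun q hq => ?_⟩⟩
  · exact F.toAddSubgroup.inf_mem_of_sup_mem hFlat (F.sub_mem (ofDual p.2).2.1 (hxF p.1)) huF
  · rintro ⟨k₁, f₁⟩ ⟨k₂, f₂⟩ ⟨hk, hf⟩
    exact inf_le_inf_right u (sub_le_sub hf (hmono hk))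
  · exact le_inf (sub_nonneg.2 ((hxs p.1).trans (ofDual p.2).2.2)) hu0
  · exact fun l hl hle =>
      nonpos_of_forall_le_majorant_sub hDed F.toAddSubgroup hFlat hs hf₀ hsf₀ hl
        fun i f hf hsf => (hle (i, toDual ⟨f, hf, hsf⟩)).trans inf_le_left
  · have hsf := (ofDual p.2).2.2
    rw [abs_of_nonneg (le_inf (abs_nonneg _) hu0)]
    exact inf_le_inf_right u <| abs_sub_le_sub_of_le_of_le (hmono hq.1) (hmono hq.2)
      ((hxs _).trans hsf) ((hxs _).trans hsf)

/-- In an order complete vector lattice `E`, every increasing order bounded net in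
an order dense majorizing sublattice `F` is uo-Cauchy in `F`. -/
theorem increasing_b_bounded_net_uo_cauchy
    {E : Type u} [AddCommGroup E] [Lattice E]
    [CovariantClass E E (· + ·) (· ≤ ·)] [Module ℝ E]
    -- `E` is order complete
    (hDed : ∀ A : Set E, A.Nonempty → BddAbove A → ∃ s : E, IsLUB A s)
    (F : Submodule ℝ E) (hFlat : ∀ x ∈ F, ∀ y ∈ F, x ⊔ y ∈ F)
    (hdense : ∀ e : E, 0 < e → ∃ f ∈ F, 0 < f ∧ f ≤ e)
    (hmaj : ∀ e : E, 0 ≤ e → ∃ f ∈ F, e ≤ f)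
    {ι : Type u} [Preorder ι] [Nonempty ι] [IsDirected ι (· ≤ ·)]
    (x : ι → E) (hxF : ∀ i, x i ∈ F) (hx0 : ∀ i, 0 ≤ x i) (hmono : Monotone x)
    (e : E) (hbdd : ∀ i, x i ≤ e) :
    ∀ u ∈ F, 0 ≤ u →
      OrderConvZeroIn (F : Set E) (fun p : ι × ι => |x p.1 - x p.2| ⊓ u) :=
  increasing_b_bounded_net_uo_cauchy_general hDed F hFlat hmaj x hxF hmono e hbdd
end

section
/- Every uo-closed sublattice F of a Dedekind complete vector lattice E has the b-property in E. -/
/-!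
An increasing net bounded above in `E` has a supremum `s` by Dedekind completeness, and it
order converges to `s`, dominated by the decreasing net `s - x i ↓ 0`. Order convergence implies
uo-convergence, so uo-closedness of `F` puts `s` itself in `F`.
-/

universe u

/-- The net `z` order converges to `0` in `E`. -/
def OrderConvZero {E : Type u} [AddCommGroup E] [Lattice E]
    {κ : Type u} [Preorder κ] (z : κ → E) : Prop :=
  ∃ (β : Type u) (pβ : Preorder β) (y : β → E),
    Nonempty β ∧
    (∀ b₁ b₂ : β, ∃ b₃ : β, pβ.le b₁ b₃ ∧ pβ.le b₂ b₃) ∧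
    (∀ b₁ b₂ : β, pβ.le b₁ b₂ → y b₂ ≤ y b₁) ∧
    IsGLB (Set.range y) 0 ∧
    (∀ b, ∃ k₀ : κ, ∀ k ≥ k₀, |z k| ≤ y b)

/-- The net `x` uo-converges to `a` in `E`. -/
def UoTendsto {E : Type u} [AddCommGroup E] [Lattice E]
    {κ : Type u} [Preorder κ] (x : κ → E) (a : E) : Prop :=
  ∀ u : E, 0 ≤ u → OrderConvZero (fun k => |x k - a| ⊓ u)

open Set

section

variable {E : Type u} [AddCommGroup E] [Lattice E]

theorem OrderConvZero.of_abs_le {κ : Type u} [Preorder κ] {z w : κ → E}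
    (hz : OrderConvZero z) (hwz : ∀ k, |w k| ≤ |z k|) : OrderConvZero w := by
  obtain ⟨β, pβ, y, hne, hdir, hanti, hglb, hdom⟩ := hz
  refine ⟨β, pβ, y, hne, hdir, hanti, hglb, fun b => ?_⟩
  obtain ⟨k₀, hk₀⟩ := hdom b
  exact ⟨k₀, fun k hk => (hwz k).trans (hk₀ k hk)⟩

variable [AddLeftMono E]

theorem Antitone.orderConvZero_of_isGLB {ι : Type u} [Preorder ι] [Nonempty ι]
    [IsDirected ι (· ≤ ·)] {y : ι → E} (hy : Antitone y) (hglb : IsGLB (range y) 0) :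
    OrderConvZero y := by
  refine ⟨ι, inferInstance, y, ‹_›, directed_of (· ≤ ·), fun _ _ h => hy h, hglb,
    fun b => ⟨b, fun k hk => ?_⟩⟩
  rw [abs_of_nonneg (hglb.1 (mem_range_self k))]
  exact hy hk

theorem UoTendsto.of_orderConvZero_sub {κ : Type u} [Preorder κ] {x : κ → E} {a : E}
    (h : OrderConvZero fun k => x k - a) : UoTendsto x a := fun u hu =>
  h.of_abs_le fun k => by
    rw [abs_of_nonneg (le_inf (abs_nonneg _) hu)]
    exact inf_le_left

theorem IsLUB.isGLB_range_const_sub {ι : Type u} {x : ι → E} {s : E}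
    (hs : IsLUB (range x) s) : IsGLB (range fun i => s - x i) 0 := by
  refine ⟨forall_mem_range.2 fun i => sub_nonneg.2 (hs.1 (mem_range_self i)), fun c hc => ?_⟩
  have hxc : ∀ i, x i ≤ s - c := fun i => le_sub_comm.1 (hc (mem_range_self i))
  simpa using sub_le_sub_left (hs.2 (forall_mem_range.2 hxc)) s

theorem Monotone.uoTendsto_of_isLUB {ι : Type u} [Preorder ι] [Nonempty ι]
    [IsDirected ι (· ≤ ·)] {x : ι → E} {s : E} (hx : Monotone x) (hs : IsLUB (range x) s) :
    UoTendsto x s := by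
  have hgap : Antitone fun i => s - x i := fun _ _ h => sub_le_sub_left (hx h) s
  exact .of_orderConvZero_sub <| (hgap.orderConvZero_of_isGLB hs.isGLB_range_const_sub).of_abs_le
    fun k => (abs_sub_comm _ _).le

end

theorem uo_closed_sublattice_has_b_property_general
    {E : Type u} [AddCommGroup E] [Lattice E]
    [CovariantClass E E (· + ·) (· ≤ ·)] [Module ℝ E]
    (hDed : ∀ A : Set E, A.Nonempty → BddAbove A → ∃ s : E, IsLUB A s)
    (F : Submodule ℝ E)
    -- `F` is uo-closed in `E`
    (huoc : ∀ (κ : Type u) [Preorder κ] [Nonempty κ] [IsDirected κ (· ≤ ·)]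
      (z : κ → E) (a : E), (∀ k, z k ∈ F) → UoTendsto z a → a ∈ F)
    {ι : Type u} [Preorder ι] [Nonempty ι] [IsDirected ι (· ≤ ·)]
    (x : ι → E) (hxF : ∀ i, x i ∈ F) (hmono : Monotone x)
    (e : E) (hbdd : ∀ i, x i ≤ e) :
    ∃ f ∈ F, ∀ i, x i ≤ f := by
  obtain ⟨s, hs⟩ := hDed (range x) (range_nonempty x) ⟨e, forall_mem_range.2 hbdd⟩
  exact ⟨s, huoc ι x s hxF (hmono.uoTendsto_of_isLUB hs), forall_mem_range.1 hs.1⟩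

/-- Every uo-closed sublattice of a Dedekind complete vector lattice has the
b-property. -/
theorem uo_closed_sublattice_has_b_property
    {E : Type u} [AddCommGroup E] [Lattice E]
    [CovariantClass E E (· + ·) (· ≤ ·)] [Module ℝ E]
    (hDed : ∀ A : Set E, A.Nonempty → BddAbove A → ∃ s : E, IsLUB A s)
    (F : Submodule ℝ E) (hFlat : ∀ x ∈ F, ∀ y ∈ F, x ⊔ y ∈ F)
    -- `F` is uo-closed in `E`
    (huoc : ∀ (κ : Type u) [Preorder κ] [Nonempty κ] [IsDirected κ (· ≤ ·)]
      (z : κ → E) (a : E), (∀ k, z k ∈ F) → UoTendsto z a → a ∈ F)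
    {ι : Type u} [Preorder ι] [Nonempty ι] [IsDirected ι (· ≤ ·)]
    (x : ι → E) (hxF : ∀ i, x i ∈ F) (hx0 : ∀ i, 0 ≤ x i) (hmono : Monotone x)
    (e : E) (hbdd : ∀ i, x i ≤ e) :
    ∃ f ∈ F, ∀ i, x i ≤ f :=
  uo_closed_sublattice_has_b_property_general hDed F huoc x hxF hmono e hbdd
end
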